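/- Let C and D be updown categories satisfying the weak commutation condition, with eigenvalue functions ε_C and ε_D (i.e., (DU − UD)(c) = ε_C(c)·c for every object c, and similarly for D). Then the product C × D satisfies the weak commutation condition with ε(c,d) = ε_C(c) + ε_D(d). In particular: if C satisfies (DU−UD) = r·I and D satisfies (DU−UD) = s·I, then C × D satisfies (DU−UD) = (r+s)·I; and if both satisfy the linear commutation condition with slope a (ε depends linearly on rank with slope a), so does C × D. -/

import Mathlib

/-! Core definitions: updown categories (Hoffman, "Updown categories"). -/

/-- The underlying data of a (small) category equipped with an ℕ-valued rank,
finite levels (given as `Finset`s) and a distinguished rank-0 object `zero`. -/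
structure UpdownData where
  Obj : Type
  Hom : Obj → Obj → Type
  id : ∀ p : Obj, Hom p p
  comp : ∀ {p q r : Obj}, Hom p q → Hom q r → Hom p r
  id_comp : ∀ {p q : Obj} (f : Hom p q), comp (id p) f = f
  comp_id : ∀ {p q : Obj} (f : Hom p q), comp f (id q) = f
  assoc : ∀ {p q r s : Obj} (f : Hom p q) (g : Hom q r) (h : Hom r s),
    comp (comp f g) h = comp f (comp g h)
  rank : Obj → ℕ
  level : ℕ → Finset Obj
  zero : Obj

namespace UpdownData

/-- Axioms A1–A5 of an updown category. -/
structure IsUpdownCat (C : UpdownData) : Prop where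
  /-- `level n` is exactly the (finite) set of objects of rank `n` (A1). -/
  mem_level : ∀ (n : ℕ) (p : C.Obj), p ∈ C.level n ↔ C.rank p = n
  /-- A2: `zero` is the unique rank-0 object. -/
  rank_zero : C.rank C.zero = 0
  zero_unique : ∀ p : C.Obj, C.rank p = 0 → p = C.zero
  /-- A2: there is a morphism from `zero` to every object. -/
  zero_init : ∀ p : C.Obj, Nonempty (C.Hom C.zero p)
  /-- A3: hom-sets are finite. -/
  homFinite : ∀ p q : C.Obj, Finite (C.Hom p q)
  /-- A3: `Hom p q` is empty unless `rank p < rank q` or `p = q`. -/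
  hom_rank : ∀ p q : C.Obj, C.Hom p q → (C.rank p < C.rank q ∨ p = q)
  /-- A3: every endomorphism is invertible, so `Hom p p = Aut p` is a group. -/
  aut_group : ∀ (p : C.Obj) (f : C.Hom p p),
    ∃ g : C.Hom p p, C.comp f g = C.id p ∧ C.comp g f = C.id p
  /-- A4: every morphism raising rank by more than one factors through the
  next level (hence, inductively, through all intermediate levels). -/
  factor : ∀ (p q : C.Obj) (f : C.Hom p q), C.rank p + 1 < C.rank q →
    ∃ (r : C.Obj) (g : C.Hom p r) (h : C.Hom r q),
      C.rank r = C.rank p + 1 ∧ C.comp g h = f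
  /-- A5: `Aut p` acts freely on `Hom p q` by precomposition when
  `rank q = rank p + 1`. -/
  free_pre : ∀ (p q : C.Obj), C.rank q = C.rank p + 1 →
    ∀ (α : C.Hom p p) (f : C.Hom p q), C.comp α f = f → α = C.id p
  /-- A5: `Aut q` acts freely on `Hom p q` by postcomposition when
  `rank q = rank p + 1`. -/
  free_post : ∀ (p q : C.Obj), C.rank q = C.rank p + 1 →
    ∀ (β : C.Hom q q) (f : C.Hom p q), C.comp f β = f → β = C.id q

/-- An updown category is unilateral if all automorphism groups are trivial. -/
def Unilateral (C : UpdownData) : Prop :=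
  ∀ (p : C.Obj) (f : C.Hom p p), f = C.id p

/-- An updown category is simple if there is at most one morphism between any
two objects and morphisms factor uniquely into rank-1 steps (so the object at
each intermediate rank in a factorization is unique). -/
def SimpleUD (C : UpdownData) : Prop :=
  (∀ p q : C.Obj, Subsingleton (C.Hom p q)) ∧
  (∀ (p q : C.Obj) (f : C.Hom p q) (k : ℕ), C.rank p < k → k < C.rank q →
    ∃! r : C.Obj, C.rank r = k ∧
      ∃ (g : C.Hom p r) (h : C.Hom r q), C.comp g h = f)

end UpdownData

/-! Up and down operators on the free vector space `Obj →₀ ℚ`. -/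

namespace UpdownData

variable (C : UpdownData)

/-- `u(p;p') = |Hom(p,p')|/|Aut(p')|` (as a rational number). -/
noncomputable def uQ (p q : C.Obj) : ℚ :=
  (Nat.card (C.Hom p q) : ℚ) / (Nat.card (C.Hom q q) : ℚ)

/-- `d(p;p') = |Hom(p,p')|/|Aut(p)|` (as a rational number). -/
noncomputable def dQ (p q : C.Obj) : ℚ :=
  (Nat.card (C.Hom p q) : ℚ) / (Nat.card (C.Hom p p) : ℚ)

/-- The free `ℚ`-vector space on the objects of `C`. -/
abbrev Vec := C.Obj →₀ ℚ

/-- `U(p) = Σ_{|p'| = |p|+1} u(p;p')·p'`. -/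
noncomputable def Uvec (p : C.Obj) : C.Vec :=
  ∑ q ∈ C.level (C.rank p + 1), C.uQ p q • Finsupp.single q 1

/-- `D(p) = Σ_{|p''| = |p|-1} d(p'';p)·p''`, and `D(0̂) = 0`. -/
noncomputable def Dvec (p : C.Obj) : C.Vec :=
  if C.rank p = 0 then 0
  else ∑ q ∈ C.level (C.rank p - 1), C.dQ q p • Finsupp.single q 1

/-- The up operator. -/
noncomputable def Uop : C.Vec →ₗ[ℚ] C.Vec :=
  Finsupp.lsum ℚ fun p => LinearMap.toSpanSingleton ℚ C.Vec (C.Uvec p)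

/-- The down operator. -/
noncomputable def Dop : C.Vec →ₗ[ℚ] C.Vec :=
  Finsupp.lsum ℚ fun p => LinearMap.toSpanSingleton ℚ C.Vec (C.Dvec p)

/-- The inner product with `⟨p,p⟩ = |Aut(p)|` on basis elements. -/
noncomputable def innerUD (x y : C.Vec) : ℚ :=
  x.sum fun p c => c * y p * (Nat.card (C.Hom p p) : ℚ)

/-- The commutator `DU - UD`. -/
noncomputable def commDU : C.Vec →ₗ[ℚ] C.Vec :=
  C.Dop ∘ₗ C.Uop - C.Uop ∘ₗ C.Dop

/-- Extended multiplicity `u(p;q)`: the coefficient of `q` in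
`U^{|q|-|p|}(p)`, i.e. `⟨U^{|q|-|p|}(p), q⟩ / |Aut q|`. -/
noncomputable def uext (p q : C.Obj) : ℚ :=
  ((C.Uop ^ (C.rank q - C.rank p)) (Finsupp.single p 1)) q

/-- Extended multiplicity `d(p;q)`: the coefficient of `p` in
`D^{|q|-|p|}(q)`. -/
noncomputable def dext (p q : C.Obj) : ℚ :=
  ((C.Dop ^ (C.rank q - C.rank p)) (Finsupp.single q 1)) p

/-- The weak commutation condition with eigenvalue function `ε`:
every object is an eigenvector of `DU - UD`. -/
def WCC (ε : C.Obj → ℚ) : Prop :=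
  ∀ p : C.Obj, C.commDU (Finsupp.single p 1) = ε p • Finsupp.single p 1

/-- The sequential commutation condition: `DU - UD` acts as the scalar `r i`
on rank `i`. -/
def SCC (r : ℕ → ℚ) : Prop :=
  ∀ p : C.Obj, C.commDU (Finsupp.single p 1) = r (C.rank p) • Finsupp.single p 1

end UpdownData

/-! The product of updown categories. -/

namespace UpdownData

open Classical in
/-- The product of two updown data: objects are pairs, hom-sets are products of
hom-sets, and the rank is the sum of the ranks. -/
noncomputable def prod (C D : UpdownData) : UpdownData where
  Obj := C.Obj × D.Obj
  Hom p q := C.Hom p.1 q.1 × D.Hom p.2 q.2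
  id p := (C.id p.1, D.id p.2)
  comp f g := (C.comp f.1 g.1, D.comp f.2 g.2)
  id_comp f := by cases f; simp [C.id_comp, D.id_comp]
  comp_id f := by cases f; simp [C.comp_id, D.comp_id]
  assoc f g h := by simp [C.assoc, D.assoc]
  rank p := C.rank p.1 + D.rank p.2
  level n := (Finset.range (n + 1)).biUnion fun i => C.level i ×ˢ D.level (n - i)
  zero := (C.zero, D.zero)

end UpdownData

/-!
Under `k(C × D) ≅ k(C) ⊗ k(D)` the up operator of the product is `U_C ⊗ 1 + 1 ⊗ U_D`: a cover of
`(c, d)` raises the rank of exactly one coordinate and leaves the other fixed, multiplicities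
multiply, and `u(p; p) = 1`. The same holds for the down operators. Since `U_C ⊗ 1` commutes with
`1 ⊗ D_D` (and symmetrically), the cross terms cancel in `DU - UD`, which therefore equals
`[D_C, U_C] ⊗ 1 + 1 ⊗ [D_D, U_D]`, and `c ⊗ d` is an eigenvector with eigenvalue
`ε_C(c) + ε_D(d)`.
-/

open Finsupp TensorProduct

section TensorCommutator

variable {R M N : Type*} [CommRing R] [AddCommGroup M] [Module R M] [AddCommGroup N] [Module R N]

theorem LinearMap.commutator_rTensor_add_lTensor (f₁ g₁ : Module.End R M)
    (f₂ g₂ : Module.End R N) :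
    (g₁.rTensor N + g₂.lTensor M) * (f₁.rTensor N + f₂.lTensor M)
        - (f₁.rTensor N + f₂.lTensor M) * (g₁.rTensor N + g₂.lTensor M)
      = (g₁ * f₁ - f₁ * g₁).rTensor N + (g₂ * f₂ - f₂ * g₂).lTensor M := by
  have hcomm : ∀ (f : Module.End R M) (g : Module.End R N),
      f.rTensor N * g.lTensor M = g.lTensor M * f.rTensor N := by
    intro f g
    simp only [Module.End.mul_eq_comp, rTensor_comp_lTensor, lTensor_comp_rTensor]
  simp only [add_mul, mul_add, ← rTensor_mul, ← lTensor_mul, rTensor_sub, lTensor_sub, hcomm]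
  abel

theorem LinearMap.rTensor_add_lTensor_tmul_eq_smul {f : Module.End R M} {g : Module.End R N}
    {v : M} {w : N} {a b : R} (hv : f v = a • v) (hw : g w = b • w) :
    (f.rTensor N + g.lTensor M) (v ⊗ₜ w) = (a + b) • (v ⊗ₜ w) := by
  rw [LinearMap.add_apply, rTensor_tmul, lTensor_tmul, hv, hw, tmul_smul, ← smul_tmul', add_smul]

end TensorCommutator

/-- A step raising `ρ + σ` by one moves exactly one coordinate; the fixed one contributes
`a x x = 1` or `b y y = 1`. -/
theorem ite_prod_step_eq {α β : Type*} [DecidableEq α] [DecidableEq β]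
    {ρ : α → ℕ} {σ : β → ℕ} {a : α → α → ℚ} {b : β → β → ℚ}
    (ha : ∀ x, a x x = 1) (ha₀ : ∀ x x', x ≠ x' → ρ x' ≤ ρ x → a x x' = 0)
    (hb : ∀ y, b y y = 1) (hb₀ : ∀ y y', y ≠ y' → σ y' ≤ σ y → b y y' = 0)
    (x x' : α) (y y' : β) :
    (if ρ x' + σ y' = ρ x + σ y + 1 then a x x' * b y y' else 0)
      = (if ρ x' = ρ x + 1 then a x x' else 0) * (if y = y' then 1 else 0)
        + (if x = x' then 1 else 0) * (if σ y' = σ y + 1 then b y y' else 0) := by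
  by_cases hx : x = x' <;> by_cases hy : y = y'
  · subst hx hy
    simp
  · subst hx
    simp only [ha, one_mul, if_true, if_neg hy, mul_zero, zero_add, Nat.add_assoc,
      Nat.add_left_cancel_iff]
  · subst hy
    simp only [hb, mul_one, if_true, if_neg hx, zero_mul, add_zero, Nat.add_right_comm _ (σ y),
      Nat.add_right_cancel_iff]
  · simp only [if_neg hx, if_neg hy, mul_zero, zero_mul, add_zero, ite_eq_right_iff]
    intro hrank
    rcases le_or_gt (ρ x') (ρ x) with h | h
    · rw [ha₀ x x' hx h, zero_mul]
    · rw [hb₀ y y' hy (by omega), mul_zero]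

namespace UpdownData

variable {C D : UpdownData}

theorem card_hom_eq_zero (hC : C.IsUpdownCat) {p q : C.Obj} (hpq : p ≠ q)
    (hrank : C.rank q ≤ C.rank p) : Nat.card (C.Hom p q) = 0 := by
  have : IsEmpty (C.Hom p q) :=
    ⟨fun f => (hC.hom_rank p q f).elim (fun h => absurd h (not_lt.2 hrank)) hpq⟩
  exact Nat.card_of_isEmpty

theorem card_aut_ne_zero (hC : C.IsUpdownCat) (p : C.Obj) : (Nat.card (C.Hom p p) : ℚ) ≠ 0 := by
  have := hC.homFinite p p
  have : Nonempty (C.Hom p p) := ⟨C.id p⟩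
  exact_mod_cast Nat.card_pos.ne'

theorem uQ_self (hC : C.IsUpdownCat) (p : C.Obj) : C.uQ p p = 1 :=
  div_self (card_aut_ne_zero hC p)

theorem dQ_self (hC : C.IsUpdownCat) (p : C.Obj) : C.dQ p p = 1 :=
  div_self (card_aut_ne_zero hC p)

theorem uQ_eq_zero (hC : C.IsUpdownCat) {p q : C.Obj} (hpq : p ≠ q)
    (hrank : C.rank q ≤ C.rank p) : C.uQ p q = 0 := by
  rw [uQ, card_hom_eq_zero hC hpq hrank, Nat.cast_zero, zero_div]

theorem dQ_eq_zero (hC : C.IsUpdownCat) {p q : C.Obj} (hpq : p ≠ q)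
    (hrank : C.rank q ≤ C.rank p) : C.dQ p q = 0 := by
  rw [dQ, card_hom_eq_zero hC hpq hrank, Nat.cast_zero, zero_div]

theorem prod_rank (x : (C.prod D).Obj) : (C.prod D).rank x = C.rank x.1 + D.rank x.2 := rfl

theorem uQ_prod (p q : (C.prod D).Obj) : (C.prod D).uQ p q = C.uQ p.1 q.1 * D.uQ p.2 q.2 := by
  simp only [uQ, prod, Nat.card_prod, Nat.cast_mul, mul_div_mul_comm]

theorem dQ_prod (p q : (C.prod D).Obj) : (C.prod D).dQ p q = C.dQ p.1 q.1 * D.dQ p.2 q.2 := by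
  simp only [dQ, prod, Nat.card_prod, Nat.cast_mul, mul_div_mul_comm]

theorem mem_prod_level (hC : C.IsUpdownCat) (hD : D.IsUpdownCat) (n : ℕ) (x : C.Obj × D.Obj) :
    x ∈ (C.prod D).level n ↔ (C.prod D).rank x = n := by
  classical
  change x ∈ (Finset.range (n + 1)).biUnion (fun i => C.level i ×ˢ D.level (n - i)) ↔
    C.rank x.1 + D.rank x.2 = n
  simp only [Finset.mem_biUnion, Finset.mem_range, Finset.mem_product, hC.mem_level,
    hD.mem_level]
  constructor
  · rintro ⟨i, hi, h1, h2⟩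
    omega
  · intro h
    exact ⟨C.rank x.1, by omega, rfl, by omega⟩

theorem Uvec_apply (hlevel : ∀ n p, p ∈ C.level n ↔ C.rank p = n) (p q : C.Obj) :
    C.Uvec p q = if C.rank q = C.rank p + 1 then C.uQ p q else 0 := by
  classical
  simp only [Uvec, Finsupp.finsetSum_apply, Finsupp.smul_apply, Finsupp.single_apply,
    smul_eq_mul, mul_ite, mul_one, mul_zero, Finset.sum_ite_eq', hlevel]

theorem Dvec_apply (hlevel : ∀ n p, p ∈ C.level n ↔ C.rank p = n) (p q : C.Obj) :
    C.Dvec p q = if C.rank p = C.rank q + 1 then C.dQ q p else 0 := by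
  classical
  by_cases h0 : C.rank p = 0
  · rw [Dvec, if_pos h0, if_neg (by omega), Finsupp.zero_apply]
  · simp only [Dvec, if_neg h0, Finsupp.finsetSum_apply, Finsupp.smul_apply,
      Finsupp.single_apply, smul_eq_mul, mul_ite, mul_one, mul_zero, Finset.sum_ite_eq', hlevel]
    exact if_congr (by omega) rfl rfl

theorem Uop_single (p : C.Obj) : C.Uop (single p 1) = C.Uvec p := by
  rw [Uop, lsum_single, LinearMap.toSpanSingleton_apply, one_smul]

theorem Dop_single (p : C.Obj) : C.Dop (single p 1) = C.Dvec p := by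
  rw [Dop, lsum_single, LinearMap.toSpanSingleton_apply, one_smul]

noncomputable def prodVecEquiv (C D : UpdownData) : C.Vec ⊗[ℚ] D.Vec ≃ₗ[ℚ] (C.prod D).Vec :=
  finsuppTensorFinsupp' ℚ C.Obj D.Obj

theorem prodVecEquiv_tmul_apply (v : C.Vec) (w : D.Vec) (p : (C.prod D).Obj) :
    prodVecEquiv C D (v ⊗ₜ w) p = v p.1 * w p.2 :=
  finsuppTensorFinsupp'_apply_apply ℚ C.Obj D.Obj v w p.1 p.2

theorem prodVecEquiv_symm_single (p : (C.prod D).Obj) :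
    (prodVecEquiv C D).symm (single p 1) = single p.1 1 ⊗ₜ single p.2 1 :=
  finsuppTensorFinsupp'_symm_single_eq_single_one_tmul ℚ C.Obj D.Obj p 1

theorem Uvec_prod_apply (hC : C.IsUpdownCat) (hD : D.IsUpdownCat) (p q : (C.prod D).Obj) :
    (C.prod D).Uvec p q
      = C.Uvec p.1 q.1 * single p.2 1 q.2 + single p.1 1 q.1 * D.Uvec p.2 q.2 := by
  classical
  rw [Uvec_apply (mem_prod_level hC hD), Uvec_apply hC.mem_level, Uvec_apply hD.mem_level,
    uQ_prod, single_apply, single_apply]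
  exact ite_prod_step_eq (uQ_self hC) (fun _ _ => uQ_eq_zero hC) (uQ_self hD)
    (fun _ _ => uQ_eq_zero hD) p.1 q.1 p.2 q.2

theorem Dvec_prod_apply (hC : C.IsUpdownCat) (hD : D.IsUpdownCat) (p q : (C.prod D).Obj) :
    (C.prod D).Dvec p q
      = C.Dvec p.1 q.1 * single p.2 1 q.2 + single p.1 1 q.1 * D.Dvec p.2 q.2 := by
  classical
  rw [Dvec_apply (mem_prod_level hC hD), Dvec_apply hC.mem_level, Dvec_apply hD.mem_level,
    dQ_prod, single_apply, single_apply]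
  refine (ite_prod_step_eq (dQ_self hC) (fun _ _ => dQ_eq_zero hC) (dQ_self hD)
    (fun _ _ => dQ_eq_zero hD) q.1 p.1 q.2 p.2).trans ?_
  simp only [eq_comm]

theorem Uop_prod (hC : C.IsUpdownCat) (hD : D.IsUpdownCat) :
    (C.prod D).Uop
      = (prodVecEquiv C D).conjAlgEquiv ℚ (C.Uop.rTensor D.Vec + D.Uop.lTensor C.Vec) := by
  ext p q
  simp only [LinearEquiv.conjAlgEquiv_apply, LinearMap.comp_apply, lsingle_apply,
    LinearEquiv.coe_coe, prodVecEquiv_symm_single, LinearMap.add_apply, LinearMap.rTensor_tmul,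
    LinearMap.lTensor_tmul, map_add, Finsupp.add_apply, prodVecEquiv_tmul_apply, Uop_single]
  exact Uvec_prod_apply hC hD p q

theorem Dop_prod (hC : C.IsUpdownCat) (hD : D.IsUpdownCat) :
    (C.prod D).Dop
      = (prodVecEquiv C D).conjAlgEquiv ℚ (C.Dop.rTensor D.Vec + D.Dop.lTensor C.Vec) := by
  ext p q
  simp only [LinearEquiv.conjAlgEquiv_apply, LinearMap.comp_apply, lsingle_apply,
    LinearEquiv.coe_coe, prodVecEquiv_symm_single, LinearMap.add_apply, LinearMap.rTensor_tmul,
    LinearMap.lTensor_tmul, map_add, Finsupp.add_apply, prodVecEquiv_tmul_apply, Dop_single]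
  exact Dvec_prod_apply hC hD p q

theorem commDU_prod (hC : C.IsUpdownCat) (hD : D.IsUpdownCat) :
    (C.prod D).commDU
      = (prodVecEquiv C D).conjAlgEquiv ℚ (C.commDU.rTensor D.Vec + D.commDU.lTensor C.Vec) := by
  simp only [commDU, ← Module.End.mul_eq_comp, Uop_prod hC hD, Dop_prod hC hD, ← map_mul,
    ← map_sub, LinearMap.commutator_rTensor_add_lTensor]

theorem WCC_prod (hC : C.IsUpdownCat) (hD : D.IsUpdownCat) {εC : C.Obj → ℚ} {εD : D.Obj → ℚ}
    (hεC : C.WCC εC) (hεD : D.WCC εD) : (C.prod D).WCC fun p => εC p.1 + εD p.2 := by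
  intro p
  simp only [commDU_prod hC hD, LinearEquiv.conjAlgEquiv_apply, LinearMap.comp_apply,
    LinearEquiv.coe_coe, prodVecEquiv_symm_single,
    LinearMap.rTensor_add_lTensor_tmul_eq_smul (hεC p.1) (hεD p.2), map_smul]
  rw [← prodVecEquiv_symm_single, LinearEquiv.apply_symm_apply]

end UpdownData

open UpdownData in
/-- products preserve the weak commutation condition with
`ε(c,d) = ε_C(c) + ε_D(d)`; in particular the absolute commutation condition
(with constants adding) and the linear commutation condition with a fixed
slope are preserved. -/
theorem updown_prod_commutation (C D : UpdownData)
    (hC : C.IsUpdownCat) (hD : D.IsUpdownCat) :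
    (∀ (εC : C.Obj → ℚ) (εD : D.Obj → ℚ), C.WCC εC → D.WCC εD →
      (UpdownData.prod C D).WCC fun x => εC x.1 + εD x.2) ∧
    (∀ r s : ℚ, C.WCC (fun _ => r) → D.WCC (fun _ => s) →
      (UpdownData.prod C D).WCC fun _ => r + s) ∧
    (∀ a bC bD : ℚ,
      C.WCC (fun c => a * (C.rank c : ℚ) + bC) →
      D.WCC (fun d => a * (D.rank d : ℚ) + bD) →
      (UpdownData.prod C D).WCC
        fun x => a * ((UpdownData.prod C D).rank x : ℚ) + (bC + bD)) := by
  refine ⟨fun _ _ => WCC_prod hC hD, fun _ _ => WCC_prod hC hD, fun a bC bD hεC hεD => ?_⟩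
  convert WCC_prod hC hD hεC hεD using 2 with p
  rw [prod_rank, Nat.cast_add]
  ring
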